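/- Let e : Ω × [t₀,∞) → ℝ be a classical (C²) solution of the forward error system with damping gain k > 0 and |g(x,t)| ≤ g₁. Then the energy E(t) = ½∫_Ω (|∇e(x,t)|² + e_t(x,t)²) dx is differentiable in t and satisfies, for all t > t₀, dE/dt ≤ −k ∫_{Γ_N} e_t² dΓ + g₁ ∫_Ω |e(x,t)| |e_t(x,t)| dx. -/

import Mathlib

open MeasureTheory Real Matrix

noncomputable section

/-- The closed unit hypercube `[0,1]^n`. -/
def cube (n : ℕ) : Set (Fin n → ℝ) := Set.univ.pi fun _ => Set.Icc (0:ℝ) 1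

/-- Partial derivative of `u` in the `p`-th coordinate direction. -/
def pd {n : ℕ} (p : Fin n) (u : (Fin n → ℝ) → ℝ) (x : Fin n → ℝ) : ℝ :=
  fderiv ℝ u x (Pi.single p 1)

/-- Squared Euclidean norm of the gradient, `|∇u|²`. -/
def gradSq {n : ℕ} (u : (Fin n → ℝ) → ℝ) (x : Fin n → ℝ) : ℝ := ∑ p, (pd p u x) ^ 2

/-- Laplacian `Δu = Σ_p u_{x_p x_p}`. -/
def lap {n : ℕ} (u : (Fin n → ℝ) → ℝ) (x : Fin n → ℝ) : ℝ := ∑ p, pd p (pd p u) x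

/-- Surface integral over `Γ_N`: `Σ_p ∫_{[0,1]^{n-1}} h|_{x_p = 1} dx'`
(each face integral realized as an integral over the cube of a function
independent of the `p`-th coordinate). -/
def faceInt {n : ℕ} (h : (Fin n → ℝ) → ℝ) : ℝ :=
  ∑ p : Fin n, ∫ x in cube n, h (Function.update x p 1)

/-- `xᵀ∇u`. -/
def xGrad {n : ℕ} (u : (Fin n → ℝ) → ℝ) (x : Fin n → ℝ) : ℝ := ∑ p, x p * pd p u x

/-- Minimal eigenvalue of a symmetric matrix, via the Rayleigh quotient. -/
def lamMin (M : Matrix (Fin 3) (Fin 3) ℝ) : ℝ :=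
  sInf {r | ∃ v : Fin 3 → ℝ, (∑ i, (v i) ^ 2) = 1 ∧ r = v ⬝ᵥ M.mulVec v}

/-- Maximal eigenvalue of a symmetric matrix, via the Rayleigh quotient. -/
def lamMax (M : Matrix (Fin 3) (Fin 3) ℝ) : ℝ :=
  sSup {r | ∃ v : Fin 3 → ℝ, (∑ i, (v i) ^ 2) = 1 ∧ r = v ⬝ᵥ M.mulVec v}

/-- Negative definiteness. -/
def NegDefM {m : ℕ} (M : Matrix (Fin m) (Fin m) ℝ) : Prop := (-M).PosDef

/-- Negative semidefiniteness. -/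
def NegSemidefM {m : ℕ} (M : Matrix (Fin m) (Fin m) ℝ) : Prop := (-M).PosSemidef

/-- The matrix `Φ₀` of LMI (12). -/
def Phi0 (n : ℕ) (χ lam0 : ℝ) : Matrix (Fin 3) (Fin 3) ℝ :=
  !![1/2 - 4*lam0/(π^2*n), Real.sqrt n * χ, 0;
     Real.sqrt n * χ, 1/2, ((n:ℝ)-1)*χ/2;
     0, ((n:ℝ)-1)*χ/2, lam0]

/-- `Φ₁ = Φ₀ + diag(4λ₀/(π²n), 0, 0)`. -/
def Phi1 (n : ℕ) (χ lam0 : ℝ) : Matrix (Fin 3) (Fin 3) ℝ :=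
  Phi0 n χ lam0 + Matrix.diagonal ![4*lam0/(π^2*n), 0, 0]

/-- The matrix `Ψ₂` of LMI (14). -/
def Psi2 (n : ℕ) (k χ δ g1 lam1 : ℝ) : Matrix (Fin 3) (Fin 3) ℝ :=
  !![-χ + δ*(1 + χ*k*((n:ℝ)-1)) + 4*lam1/(π^2*n), 2*δ*Real.sqrt n*χ, Real.sqrt n*g1*χ;
     2*δ*Real.sqrt n*χ, -χ + δ, g1/2 + δ*((n:ℝ)-1)*χ;
     Real.sqrt n*g1*χ, g1/2 + δ*((n:ℝ)-1)*χ, -lam1 + g1*((n:ℝ)-1)*χ]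

/-- The matrix `Φ` of the exact-observability LMI (32), with `σ = e^{-2δT*}`. -/
def PhiM (n : ℕ) (χ σ lam2 : ℝ) : Matrix (Fin 3) (Fin 3) ℝ :=
  !![-(1-σ)/2 + 4*lam2/(π^2*n), Real.sqrt n*(1+σ)*χ, 0;
     Real.sqrt n*(1+σ)*χ, -(1-σ)/2, ((n:ℝ)-1)*(1+σ)*χ/2;
     0, ((n:ℝ)-1)*(1+σ)*χ/2, -lam2]

/-- `α = 2λ_min(Φ₀)`. -/
def alphaC (n : ℕ) (χ lam0 : ℝ) : ℝ := 2 * lamMin (Phi0 n χ lam0)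

/-- `β = 2(1 + 4/(π²n))λ_max(Φ₁) + χk(n−1)`. -/
def betaC (n : ℕ) (k χ lam0 : ℝ) : ℝ :=
  2 * (1 + 4/(π^2*n)) * lamMax (Phi1 n χ lam0) + χ*k*((n:ℝ)-1)

/-! Auxiliary lemmas -/

lemma cube_eq_Icc (n : ℕ) : cube n = Set.Icc (0 : Fin n → ℝ) 1 := by
  rw [← Set.pi_univ_Icc]; rfl

lemma isCompact_cube (n : ℕ) : IsCompact (cube n) := by
  rw [cube_eq_Icc]; exact isCompact_Icc

lemma measurableSet_cube (n : ℕ) : MeasurableSet (cube n) := by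
  rw [cube_eq_Icc]; exact measurableSet_Icc

section smooth
variable {n : ℕ} {e : ℝ → (Fin n → ℝ) → ℝ}
  (he : ContDiff ℝ 2 fun q : ℝ × (Fin n → ℝ) => e q.1 q.2)

abbrev Efun (e : ℝ → (Fin n → ℝ) → ℝ) : ℝ × (Fin n → ℝ) → ℝ := fun q => e q.1 q.2
abbrev Df (e : ℝ → (Fin n → ℝ) → ℝ) : ℝ × (Fin n → ℝ) → (ℝ × (Fin n → ℝ)) →L[ℝ] ℝ :=
  fderiv ℝ (Efun e)
abbrev D2 (e : ℝ → (Fin n → ℝ) → ℝ) :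
    ℝ × (Fin n → ℝ) → (ℝ × (Fin n → ℝ)) →L[ℝ] (ℝ × (Fin n → ℝ)) →L[ℝ] ℝ :=
  fderiv ℝ (Df e)

def tau (n : ℕ) : ℝ × (Fin n → ℝ) := (1, 0)
def sp {n : ℕ} (p : Fin n) : ℝ × (Fin n → ℝ) := (0, Pi.single p 1)

include he

lemma hDf_diff : ContDiff ℝ 1 (Df e) := he.fderiv_right (by norm_num)

lemma hasDerivAt_time (t : ℝ) (x : Fin n → ℝ) :
    HasDerivAt (fun s => e s x) (Df e (t, x) (tau n)) t := by
  have h1 : HasDerivAt (fun s : ℝ => (s, x)) ((1:ℝ), (0 : Fin n → ℝ)) t :=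
    (hasDerivAt_id t).prodMk (hasDerivAt_const t x)
  exact ((he.differentiable (by norm_num)) (t, x)).hasFDerivAt.comp_hasDerivAt t h1

lemma deriv_time (t : ℝ) (x : Fin n → ℝ) :
    deriv (fun s => e s x) t = Df e (t, x) (tau n) := (hasDerivAt_time he t x).deriv

lemma hasFDerivAt_space (t : ℝ) (x : Fin n → ℝ) :
    HasFDerivAt (e t) ((Df e (t, x)).comp (ContinuousLinearMap.inr ℝ ℝ (Fin n → ℝ))) x := by
  have h1 : HasFDerivAt (fun y : Fin n → ℝ => (t, y))
      (ContinuousLinearMap.inr ℝ ℝ (Fin n → ℝ)) x := hasFDerivAt_prodMk_right t x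
  exact ((he.differentiable (by norm_num)) (t, x)).hasFDerivAt.comp x h1

lemma pd_eq (t : ℝ) (x : Fin n → ℝ) (p : Fin n) :
    pd p (e t) x = Df e (t, x) (sp p) := by
  rw [pd, (hasFDerivAt_space he t x).fderiv]; rfl

lemma hasDerivAt_Df_time (t : ℝ) (x : Fin n → ℝ) (c : ℝ × (Fin n → ℝ)) :
    HasDerivAt (fun s => Df e (s, x) c) (D2 e (t, x) (tau n) c) t := by
  have h1 : HasDerivAt (fun s : ℝ => (s, x)) ((1:ℝ), (0 : Fin n → ℝ)) t :=
    (hasDerivAt_id t).prodMk (hasDerivAt_const t x)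
  have h2 : HasDerivAt (fun s => Df e (s, x)) (D2 e (t, x) (tau n)) t :=
    (((hDf_diff he).differentiable one_ne_zero) (t, x)).hasFDerivAt.comp_hasDerivAt t h1
  exact h2.clm_apply (hasDerivAt_const t c)|>.congr_deriv (by simp)

lemma hasFDerivAt_Df_space (t : ℝ) (x : Fin n → ℝ) (c : ℝ × (Fin n → ℝ)) :
    HasFDerivAt (fun y => Df e (t, y) c)
      (((D2 e (t, x)).flip c).comp (ContinuousLinearMap.inr ℝ ℝ (Fin n → ℝ))) x := by
  have h1 : HasFDerivAt (fun y : Fin n → ℝ => (t, y))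
      (ContinuousLinearMap.inr ℝ ℝ (Fin n → ℝ)) x := hasFDerivAt_prodMk_right t x
  have h2 : HasFDerivAt (fun y => Df e (t, y))
      ((D2 e (t, x)).comp (ContinuousLinearMap.inr ℝ ℝ (Fin n → ℝ))) x :=
    (((hDf_diff he).differentiable one_ne_zero) (t, x)).hasFDerivAt.comp x h1
  have h3 := h2.clm_apply (hasFDerivAt_const c x)
  apply h3.congr_fderiv
  ext v
  simp

lemma D2_symm (q : ℝ × (Fin n → ℝ)) (a b : ℝ × (Fin n → ℝ)) :
    D2 e q a b = D2 e q b a := by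
  refine second_derivative_symmetric (f := Efun e) (f' := Df e) (x := q)
    (fun y => ?_) ?_ a b
  · exact ((he.differentiable (by norm_num)) y).hasFDerivAt
  · exact (((hDf_diff he).differentiable one_ne_zero) q).hasFDerivAt

lemma pd_pd_eq (t : ℝ) (x : Fin n → ℝ) (p : Fin n) :
    pd p (pd p (e t)) x = D2 e (t, x) (sp p) (sp p) := by
  have h1 : pd p (e t) = fun y => Df e (t, y) (sp p) := funext fun y => pd_eq he t y p
  rw [pd, h1, (hasFDerivAt_Df_space he t x (sp p)).fderiv]
  simp [sp]

lemma pd_v_eq (t : ℝ) (x : Fin n → ℝ) (p : Fin n) :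
    pd p (fun y => Df e (t, y) (tau n)) x = D2 e (t, x) (sp p) (tau n) := by
  rw [pd, (hasFDerivAt_Df_space he t x (tau n)).fderiv]
  simp [sp]

lemma deriv2_time (t : ℝ) (x : Fin n → ℝ) :
    deriv (deriv (fun s => e s x)) t = D2 e (t, x) (tau n) (tau n) := by
  have h1 : deriv (fun s => e s x) = fun s => Df e (s, x) (tau n) :=
    funext fun s => deriv_time he s x
  rw [h1, (hasDerivAt_Df_time he t x (tau n)).deriv]

def Fint (e : ℝ → (Fin n → ℝ) → ℝ) (q : ℝ × (Fin n → ℝ)) : ℝ :=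
  (∑ p, (Df e q (sp p)) ^ 2) + (Df e q (tau n)) ^ 2

def Fint' (e : ℝ → (Fin n → ℝ) → ℝ) (q : ℝ × (Fin n → ℝ)) : ℝ :=
  (∑ p, 2 * Df e q (sp p) * D2 e q (tau n) (sp p)) + 2 * Df e q (tau n) * D2 e q (tau n) (tau n)

lemma contDf : Continuous (Df e) := he.continuous_fderiv (by norm_num)

lemma contD2 : Continuous (D2 e) := (hDf_diff he).continuous_fderiv one_ne_zero

lemma contDfApp (c : ℝ × (Fin n → ℝ)) : Continuous fun q => Df e q c :=
  (contDf he).clm_apply continuous_const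

lemma contD2App (a b : ℝ × (Fin n → ℝ)) : Continuous fun q => D2 e q a b :=
  ((contD2 he).clm_apply continuous_const).clm_apply continuous_const

lemma contFint : Continuous (Fint e) := by
  apply Continuous.add
  · exact continuous_finset_sum _ fun p _ => (contDfApp he (sp p)).pow 2
  · exact (contDfApp he (tau n)).pow 2

lemma contFint' : Continuous (Fint' e) := by
  apply Continuous.add
  · exact continuous_finset_sum _ fun p _ =>
      ((continuous_const.mul (contDfApp he (sp p))).mul (contD2App he (tau n) (sp p)))
  · exact (continuous_const.mul (contDfApp he (tau n))).mul (contD2App he (tau n) (tau n))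

lemma hasDerivAt_Fint (t : ℝ) (x : Fin n → ℝ) :
    HasDerivAt (fun s => Fint e (s, x)) (Fint' e (t, x)) t := by
  have h1 : ∀ c, HasDerivAt (fun s => (Df e (s, x) c) ^ 2)
      (2 * Df e (t, x) c * D2 e (t, x) (tau n) c) t := by
    intro c
    have := (hasDerivAt_Df_time he t x c).fun_pow 2
    simpa [mul_comm, mul_assoc, mul_left_comm] using this
  have hsum := HasDerivAt.fun_sum (fun p (_ : p ∈ Finset.univ) => h1 (sp p))
  simpa [Fint, Fint'] using hsum.fun_add (h1 (tau n))

lemma energy_deriv (t : ℝ) :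
    HasDerivAt (fun s => ∫ x in cube n, Fint e (s, x))
      (∫ x in cube n, Fint' e (t, x)) t := by
  have hcomp : IsCompact (cube n) := isCompact_cube n
  have hKcomp : IsCompact ((Set.Icc (t-1) (t+1)) ×ˢ cube n) := isCompact_Icc.prod hcomp
  obtain ⟨C, hC⟩ := hKcomp.exists_bound_of_continuousOn ((contFint' he).continuousOn)
  have key := hasDerivAt_integral_of_dominated_loc_of_deriv_le (F := fun s x => Fint e (s, x))
    (F' := fun s x => Fint' e (s, x)) (μ := volume.restrict (cube n)) (x₀ := t)
    (bound := fun _ => C) (s := Metric.ball t 1) (Metric.ball_mem_nhds t one_pos)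
    (Filter.Eventually.of_forall fun s =>
      ((contFint he).comp (Continuous.prodMk_right s)).aestronglyMeasurable)
    ?_ ?_ ?_ ?_ ?_
  · exact key.2
  · exact ((contFint he).comp (Continuous.prodMk_right t)).continuousOn.integrableOn_compact hcomp
  · exact ((contFint' he).comp (Continuous.prodMk_right t)).aestronglyMeasurable
  · rw [ae_restrict_iff' (measurableSet_cube n)]
    refine Filter.Eventually.of_forall fun x hx s hs => ?_
    refine hC (s, x) ⟨?_, hx⟩
    have := Metric.mem_ball.1 hs
    rw [Real.dist_eq] at this
    constructor <;> [linarith [(abs_lt.1 this).1]; linarith [(abs_lt.1 this).2]]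
  · exact integrableOn_const hcomp.measure_lt_top.ne
  · exact Filter.Eventually.of_forall fun x s _ => hasDerivAt_Fint he s x

end smooth

lemma update_eq_insertNth {m : ℕ} (p : Fin (m+1)) (c : ℝ) (x : Fin (m+1) → ℝ) :
    Function.update x p c = p.insertNth c (p.removeNth x) := by
  funext j
  refine Fin.succAboveCases p ?_ ?_ j
  · simp
  · intro i
    simp [Function.update_of_ne (Fin.succAbove_ne p i), Fin.removeNth]

lemma faceSlice {m : ℕ} (h : (Fin (m+1) → ℝ) → ℝ) (hh : Continuous h) (p : Fin (m+1)) (c : ℝ) :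
    ∫ x in cube (m+1), h (Function.update x p c)
      = ∫ y in Set.Icc (0 : Fin m → ℝ) 1, h (p.insertNth c y) := by
  set S := Set.Icc (0:ℝ) 1 ×ˢ Set.Icc (0 : Fin m → ℝ) 1 with hS
  set ψ := MeasurableEquiv.piFinSuccAbove (fun _ : Fin (m+1) => ℝ) p with hψ
  have hψap : ∀ x, ψ x = (x p, p.removeNth x) := fun _ => rfl
  have hmp : MeasurePreserving ψ volume volume := volume_preserving_piFinSuccAbove _ p
  have hemb : MeasurableEmbedding ψ := ψ.measurableEmbedding
  have hpre : cube (m+1) = ψ ⁻¹' S := by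
    ext x
    simp only [Set.mem_preimage, hψap, hS, Set.mem_prod, cube, Set.mem_pi, Set.mem_univ,
      true_imp_iff, Set.mem_Icc, Pi.le_def]
    constructor
    · intro hx
      exact ⟨⟨(hx p).1, (hx p).2⟩, fun j => (hx _).1, fun j => (hx _).2⟩
    · rintro ⟨h1, h2, h3⟩ i
      refine Fin.succAboveCases p ⟨h1.1, h1.2⟩ (fun j => ⟨h2 j, h3 j⟩) i
  have hfun : ∀ x, h (Function.update x p c) = h (p.insertNth c (ψ x).2) := by
    intro x; rw [update_eq_insertNth, hψap]
  calc ∫ x in cube (m+1), h (Function.update x p c)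
      = ∫ x in ψ ⁻¹' S, h (p.insertNth c (ψ x).2) := by
        rw [← hpre]
        exact setIntegral_congr_fun (measurableSet_cube _) fun x _ => hfun x
    _ = ∫ z in S, h (p.insertNth c z.2) :=
        hmp.setIntegral_preimage_emb hemb (fun z => h (p.insertNth c z.2)) S
    _ = ∫ y in Set.Icc (0 : Fin m → ℝ) 1, h (p.insertNth c y) := by
        have hcont : Continuous fun z : ℝ × (Fin m → ℝ) => h (p.insertNth c z.2) :=
          hh.comp (Continuous.finInsertNth p continuous_const continuous_snd)
        have hScomp : IsCompact S := isCompact_Icc.prod isCompact_Icc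
        have hint : Integrable (fun z : ℝ × (Fin m → ℝ) => h (p.insertNth c z.2))
            ((volume.restrict (Set.Icc (0:ℝ) 1)).prod
              (volume.restrict (Set.Icc (0:Fin m → ℝ) 1))) := by
          rw [Measure.prod_restrict, ← hS]
          exact hcont.continuousOn.integrableOn_compact hScomp
        rw [hS, Measure.volume_eq_prod, ← Measure.prod_restrict, integral_prod _ hint]
        simp [Real.volume_Icc]

/-- **Energy dissipation estimate** (proof of Theorem 1). For a classical (C²)
solution of the forward error system `e_tt = Δe + g(x,t)e` with `|g| ≤ g₁`,
`e = 0` on `Γ_D` and `e_{x_p} = −k e_t` on each face `{x_p = 1}`, the energy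
`E(t) = ½∫_Ω (|∇e|² + e_t²) dx` is differentiable and
`dE/dt ≤ −k ∫_{Γ_N} e_t² dΓ + g₁ ∫_Ω |e||e_t| dx`. -/
theorem energy_dissipation (n : ℕ) (hn : 1 ≤ n) (k g1 : ℝ) (hk : 0 < k) (hg1 : 0 < g1)
    (t0 : ℝ) (e : ℝ → (Fin n → ℝ) → ℝ)
    (he : ContDiff ℝ 2 fun q : ℝ × (Fin n → ℝ) => e q.1 q.2)
    (g : (Fin n → ℝ) → ℝ → ℝ)
    (hg : Continuous fun q : (Fin n → ℝ) × ℝ => g q.1 q.2)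
    (hgb : ∀ x ∈ cube n, ∀ t, t0 ≤ t → |g x t| ≤ g1)
    (hwave : ∀ t, t0 < t → ∀ x ∈ cube n,
      deriv (deriv fun s => e s x) t = lap (e t) x + g x t * e t x)
    (hDir : ∀ t, t0 ≤ t → ∀ x ∈ cube n, (∃ p, x p = 0) → e t x = 0)
    (hNeu : ∀ t, t0 ≤ t → ∀ x ∈ cube n, ∀ p, x p = 1 →
      pd p (e t) x = -k * deriv (fun s => e s x) t)
    (E : ℝ → ℝ)
    (hE : ∀ t, E t = (1/2) * ∫ x in cube n, (gradSq (e t) x + (deriv (fun s => e s x) t) ^ 2)) :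
    ∀ t, t0 < t → DifferentiableAt ℝ E t ∧
      deriv E t ≤ -k * faceInt (fun x => (deriv (fun s => e s x) t) ^ 2)
        + g1 * ∫ x in cube n, |e t x| * |deriv (fun s => e s x) t| := by
  obtain ⟨m, rfl⟩ : ∃ m, n = m + 1 := ⟨n - 1, (Nat.succ_pred_eq_of_pos hn).symm⟩
  intro t ht
  have ht0 : t0 ≤ t := le_of_lt ht
  -- E as integral of Fint
  have hEfun : E = fun s => (1/2) * ∫ x in cube (m+1), Fint e (s, x) := by
    funext s
    rw [hE s]
    congr 1
    refine setIntegral_congr_fun (measurableSet_cube _) fun x _ => ?_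
    simp only [gradSq, Fint, pd_eq he, deriv_time he]
  have hDeriv : HasDerivAt E ((1/2) * ∫ x in cube (m+1), Fint' e (t, x)) t := by
    rw [hEfun]; exact (energy_deriv he t).const_mul (1/2)
  refine ⟨hDeriv.differentiableAt, ?_⟩
  rw [hDeriv.deriv]
  -- time derivative vanishes on the Dirichlet part
  have hv0 : ∀ x, x ∈ cube (m+1) → (∃ p, x p = 0) → Df e (t, x) (tau (m+1)) = 0 := by
    intro x hx hp
    rw [← deriv_time he t x]
    have hev : (fun s => e s x) =ᶠ[nhds t] fun _ => 0 := by
      filter_upwards [isOpen_Ioi.mem_nhds ht] with s hs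
      exact hDir s (le_of_lt hs) x hx hp
    rw [hev.deriv_eq]
    simp
  -- the vector field and its derivative
  set B := fun (c : ℝ × (Fin (m+1) → ℝ)) (x : Fin (m+1) → ℝ) =>
    ((D2 e (t, x)).flip c).comp (ContinuousLinearMap.inr ℝ ℝ (Fin (m+1) → ℝ)) with hB
  set w := fun (i : Fin (m+1)) (x : Fin (m+1) → ℝ) =>
    Df e (t, x) (tau (m+1)) * Df e (t, x) (sp i) with hw
  set w' := fun (i : Fin (m+1)) (x : Fin (m+1) → ℝ) =>
    Df e (t, x) (tau (m+1)) • B (sp i) x + Df e (t, x) (sp i) • B (tau (m+1)) x with hw'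
  have hwD : ∀ i x, HasFDerivAt (w i) (w' i x) x := fun i x =>
    (hasFDerivAt_Df_space he t x (tau (m+1))).mul (hasFDerivAt_Df_space he t x (sp i))
  have happ : ∀ (i : Fin (m+1)) x (j : Fin (m+1)), w' i x (Pi.single j 1) =
      Df e (t, x) (tau (m+1)) * D2 e (t, x) (sp j) (sp i)
        + Df e (t, x) (sp i) * D2 e (t, x) (sp j) (tau (m+1)) := by
    intro i x j
    simp [hw', hB, sp, smul_eq_mul]
  have hdiv : ∀ x, (∑ i, w' i x (Pi.single i 1)) =
      Df e (t, x) (tau (m+1)) * (∑ i, D2 e (t, x) (sp i) (sp i))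
      + ∑ i, Df e (t, x) (sp i) * D2 e (t, x) (sp i) (tau (m+1)) := by
    intro x
    simp only [happ]
    rw [Finset.sum_add_distrib, Finset.mul_sum]
  -- continuity helpers at fixed t
  have hcDfx : ∀ c, Continuous fun x : Fin (m+1) → ℝ => Df e (t, x) c :=
    fun c => (contDfApp he c).comp (Continuous.prodMk_right t)
  have hcD2x : ∀ a b, Continuous fun x : Fin (m+1) → ℝ => D2 e (t, x) a b :=
    fun a b => (contD2App he a b).comp (Continuous.prodMk_right t)
  have hcdiv : Continuous fun x : Fin (m+1) → ℝ => ∑ i, w' i x (Pi.single i 1) := by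
    rw [show (fun x : Fin (m+1) → ℝ => ∑ i, w' i x (Pi.single i 1)) = fun x =>
        Df e (t, x) (tau (m+1)) * (∑ i, D2 e (t, x) (sp i) (sp i))
        + ∑ i, Df e (t, x) (sp i) * D2 e (t, x) (sp i) (tau (m+1)) from funext hdiv]
    exact ((hcDfx _).mul (continuous_finset_sum _ fun i _ => hcD2x _ _)).add
      (continuous_finset_sum _ fun i _ => (hcDfx _).mul (hcD2x _ _))
  -- divergence theorem
  have hle : (0 : Fin (m+1) → ℝ) ≤ 1 := fun i => by norm_num
  have hdivthm := MeasureTheory.integral_divergence_of_hasFDerivAt_off_countable'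
    (a := (0 : Fin (m+1) → ℝ)) (b := 1) hle w w' ∅ Set.countable_empty
    (fun i => ((hcDfx (tau (m+1))).mul (hcDfx (sp i))).continuousOn)
    (fun x _ i => hwD i x)
    (hcdiv.continuousOn.integrableOn_compact isCompact_Icc)
  -- face inclusion into the cube
  have hface0 : ((0 : Fin (m+1) → ℝ) ∘ Fin.succAbove (0:Fin (m+1))) = (0 : Fin m → ℝ) := rfl
  have hmemcube : ∀ (i : Fin (m+1)) (c : ℝ), c ∈ Set.Icc (0:ℝ) 1 →
      ∀ y ∈ Set.Icc ((0 : Fin (m+1) → ℝ) ∘ i.succAbove) ((1 : Fin (m+1) → ℝ) ∘ i.succAbove),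
      i.insertNth c y ∈ cube (m+1) := by
    intro i c hc y hy j _
    refine Fin.succAboveCases i ?_ ?_ j
    · simpa using hc
    · intro l
      have h1 := hy.1 l
      have h2 := hy.2 l
      simp only [Function.comp_apply, Pi.zero_apply, Pi.one_apply] at h1 h2
      simpa using And.intro h1 h2
  -- compute the boundary terms
  have hbdry : ∀ i : Fin (m+1),
      ((∫ y in Set.Icc ((0:Fin (m+1) → ℝ) ∘ i.succAbove) ((1:Fin (m+1) → ℝ) ∘ i.succAbove),
          w i (i.insertNth ((1:Fin (m+1) → ℝ) i) y))
        - ∫ y in Set.Icc ((0:Fin (m+1) → ℝ) ∘ i.succAbove) ((1:Fin (m+1) → ℝ) ∘ i.succAbove),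
          w i (i.insertNth ((0:Fin (m+1) → ℝ) i) y))
      = -k * ∫ y in Set.Icc (0 : Fin m → ℝ) 1,
          (Df e (t, i.insertNth 1 y) (tau (m+1)))^2 := by
    intro i
    have hfront : ∀ y ∈ Set.Icc ((0:Fin (m+1) → ℝ) ∘ i.succAbove)
        ((1:Fin (m+1) → ℝ) ∘ i.succAbove),
        w i (i.insertNth ((1:Fin (m+1) → ℝ) i) y)
          = -k * (Df e (t, i.insertNth 1 y) (tau (m+1)))^2 := by
      intro y hy
      have hz : i.insertNth (1:ℝ) y ∈ cube (m+1) :=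
        hmemcube i 1 (by norm_num) y hy
      have hz1 : (i.insertNth (1:ℝ) y : Fin (m+1) → ℝ) i = 1 := by simp
      have hNeu' := hNeu t ht0 _ hz i hz1
      rw [pd_eq he, deriv_time he] at hNeu'
      simp only [hw, Pi.one_apply]
      rw [hNeu']
      ring
    have hback : ∀ y ∈ Set.Icc ((0:Fin (m+1) → ℝ) ∘ i.succAbove)
        ((1:Fin (m+1) → ℝ) ∘ i.succAbove),
        w i (i.insertNth ((0:Fin (m+1) → ℝ) i) y) = 0 := by
      intro y hy
      have hz : i.insertNth (0:ℝ) y ∈ cube (m+1) :=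
        hmemcube i 0 (by norm_num) y hy
      have hv := hv0 _ hz ⟨i, by simp⟩
      simp only [hw, Pi.zero_apply]
      rw [hv, zero_mul]
    rw [setIntegral_congr_fun measurableSet_Icc hfront,
        setIntegral_congr_fun measurableSet_Icc hback, integral_const_mul]
    have hfs : Set.Icc ((0:Fin (m+1) → ℝ) ∘ i.succAbove) ((1:Fin (m+1) → ℝ) ∘ i.succAbove)
        = Set.Icc (0 : Fin m → ℝ) 1 := by
      congr 1 <;> funext j <;> simp
    rw [hfs]
    simp
  -- the divergence integral over the cube
  have hdivint : ∫ x in cube (m+1), (∑ i, w' i x (Pi.single i 1))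
      = -k * faceInt (fun x => (deriv (fun s => e s x) t)^2) := by
    have hfaceInt : faceInt (fun x => (deriv (fun s => e s x) t)^2)
        = ∑ i : Fin (m+1), ∫ y in Set.Icc (0 : Fin m → ℝ) 1,
            (Df e (t, i.insertNth 1 y) (tau (m+1)))^2 := by
      rw [faceInt]
      refine Finset.sum_congr rfl fun p _ => ?_
      simp only [deriv_time he]
      exact faceSlice (fun x => (Df e (t, x) (tau (m+1)))^2) ((hcDfx _).pow 2) p 1
    rw [cube_eq_Icc, hdivthm, hfaceInt, Finset.mul_sum]
    refine Finset.sum_congr rfl fun i _ => ?_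
    have := hbdry i
    rw [this]
  -- pointwise identity on the cube
  have hpoint : ∀ x ∈ cube (m+1), (1/2 : ℝ) * Fint' e (t, x)
      = (∑ i, w' i x (Pi.single i 1)) + g x t * e t x * Df e (t, x) (tau (m+1)) := by
    intro x hx
    rw [hdiv x]
    have h2 : D2 e (t, x) (tau (m+1)) (tau (m+1)) = lap (e t) x + g x t * e t x := by
      rw [← deriv2_time he t x]; exact hwave t ht x hx
    have hlap : lap (e t) x = ∑ i, D2 e (t, x) (sp i) (sp i) :=
      Finset.sum_congr rfl fun i _ => pd_pd_eq he t x i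
    have hsym : ∀ p : Fin (m+1), D2 e (t, x) (tau (m+1)) (sp p)
        = D2 e (t, x) (sp p) (tau (m+1)) := fun p => D2_symm he _ _ _
    simp only [Fint', h2, hlap, hsym]
    rw [show (∑ p : Fin (m+1), 2 * Df e (t, x) (sp p) * D2 e (t, x) (sp p) (tau (m+1)))
        = 2 * ∑ p : Fin (m+1), Df e (t, x) (sp p) * D2 e (t, x) (sp p) (tau (m+1)) by
      rw [Finset.mul_sum]; exact Finset.sum_congr rfl fun p _ => by ring]
    ring
  -- integrability of the two pieces
  have hcont_guv : Continuous fun x : Fin (m+1) → ℝ =>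
      g x t * e t x * Df e (t, x) (tau (m+1)) := by
    have hcg : Continuous fun x : Fin (m+1) → ℝ => g x t :=
      hg.comp (continuous_id.prodMk continuous_const)
    have hce : Continuous fun x : Fin (m+1) → ℝ => e t x :=
      he.continuous.comp (Continuous.prodMk_right t)
    exact (hcg.mul hce).mul (hcDfx _)
  have hint1 : IntegrableOn (fun x => ∑ i, w' i x (Pi.single i 1)) (cube (m+1)) :=
    hcdiv.continuousOn.integrableOn_compact (isCompact_cube _)
  have hint2 : IntegrableOn (fun x => g x t * e t x * Df e (t, x) (tau (m+1))) (cube (m+1)) :=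
    hcont_guv.continuousOn.integrableOn_compact (isCompact_cube _)
  have hsplit : ∫ x in cube (m+1), (1/2 : ℝ) * Fint' e (t, x)
      = (∫ x in cube (m+1), ∑ i, w' i x (Pi.single i 1))
        + ∫ x in cube (m+1), g x t * e t x * Df e (t, x) (tau (m+1)) := by
    rw [← integral_add hint1 hint2]
    exact setIntegral_congr_fun (measurableSet_cube _) hpoint
  -- final estimate on the potential term
  have hintR : IntegrableOn (fun x => g1 * (|e t x| * |Df e (t, x) (tau (m+1))|))
      (cube (m+1)) := by
    have : Continuous fun x : Fin (m+1) → ℝ =>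
        g1 * (|e t x| * |Df e (t, x) (tau (m+1))|) :=
      continuous_const.mul (((he.continuous.comp (Continuous.prodMk_right t)).abs).mul (hcDfx _).abs)
    exact this.continuousOn.integrableOn_compact (isCompact_cube _)
  have hlast : ∫ x in cube (m+1), g x t * e t x * Df e (t, x) (tau (m+1))
      ≤ g1 * ∫ x in cube (m+1), |e t x| * |deriv (fun s => e s x) t| := by
    simp only [deriv_time he]
    rw [← integral_const_mul]
    refine setIntegral_mono_on hint2 hintR (measurableSet_cube _) fun x hx => ?_
    calc g x t * e t x * Df e (t, x) (tau (m+1))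
        ≤ |g x t * e t x * Df e (t, x) (tau (m+1))| := le_abs_self _
      _ = |g x t| * (|e t x| * |Df e (t, x) (tau (m+1))|) := by
          rw [abs_mul, abs_mul, mul_assoc]
      _ ≤ g1 * (|e t x| * |Df e (t, x) (tau (m+1))|) := by
          apply mul_le_mul_of_nonneg_right (hgb x hx t ht0)
          positivity
  calc (1/2 : ℝ) * ∫ x in cube (m+1), Fint' e (t, x)
      = ∫ x in cube (m+1), (1/2 : ℝ) * Fint' e (t, x) := (integral_const_mul _ _).symm
    _ = (∫ x in cube (m+1), ∑ i, w' i x (Pi.single i 1))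
        + ∫ x in cube (m+1), g x t * e t x * Df e (t, x) (tau (m+1)) := hsplit
    _ = -k * faceInt (fun x => (deriv (fun s => e s x) t)^2)
        + ∫ x in cube (m+1), g x t * e t x * Df e (t, x) (tau (m+1)) := by rw [hdivint]
    _ ≤ -k * faceInt (fun x => (deriv (fun s => e s x) t)^2)
        + g1 * ∫ x in cube (m+1), |e t x| * |deriv (fun s => e s x) t| :=
        add_le_add_right hlast _
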